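/- Let G be a centerless group with automorphism tower ⟨G^α⟩, and suppose λ is a cardinal such that |G^α| ≤ λ for every ordinal α. Then the automorphism tower stabilizes and τ_G < λ⁺, where λ⁺ is the successor cardinal of λ. -/

import Mathlib

universe u

/-- The automorphism tower of a centerless group `G`: an ordinal-indexed increasing
continuous chain of groups, starting at `G`, where each successor stage is (identified
with) the automorphism group of the previous stage via the conjugation embedding. -/
structure AutTower (G : Type u) [Group G] where
  /-- the `o`-th stage `G^o` of the tower -/
  Stage : Ordinal.{u} → GrpCat.{u}
  /-- the inclusion maps of the tower -/
  map : ∀ ⦃o₁ o₂ : Ordinal.{u}⦄, o₁ ≤ o₂ → (↥(Stage o₁) →* ↥(Stage o₂))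
  map_id : ∀ (o : Ordinal.{u}) (x : ↥(Stage o)), map le_rfl x = x
  map_comp : ∀ ⦃o₁ o₂ o₃ : Ordinal.{u}⦄ (h₁ : o₁ ≤ o₂) (h₂ : o₂ ≤ o₃) (x : ↥(Stage o₁)),
      map h₂ (map h₁ x) = map (h₁.trans h₂) x
  map_injective : ∀ ⦃o₁ o₂ : Ordinal.{u}⦄ (h : o₁ ≤ o₂), Function.Injective (map h)
  /-- the identification of `G` with the `0`-th stage -/
  emb0 : G ≃* ↥(Stage 0)
  /-- the identification of the `(o+1)`-st stage with `Aut(G^o)` -/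
  succIso : ∀ o : Ordinal.{u}, ↥(Stage (o + 1)) ≃* MulAut ↥(Stage o)
  /-- under the above identification, the inclusion `G^o ≤ G^{o+1}` is `g ↦` conjugation by `g` -/
  succIso_map : ∀ (o : Ordinal.{u}) (x : ↥(Stage o)),
      succIso o (map (show o ≤ o + 1 from le_self_add) x) = MulAut.conj x
  /-- at limit stages the tower is continuous: `G^δ = ⋃_{α<δ} G^α` -/
  limit_covers : ∀ (o : Ordinal.{u}), Order.IsSuccLimit o → ∀ x : ↥(Stage o),
      ∃ (o' : Ordinal.{u}) (h : o' < o), x ∈ Set.range (map h.le)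

namespace AutTower

variable {G : Type u} [Group G]

/-- the embedding of `G` into the `o`-th stage of its automorphism tower -/
def embed (T : AutTower G) (o : Ordinal.{u}) : G →* ↥(T.Stage o) :=
  (T.map (show (0 : Ordinal.{u}) ≤ o from by simp)).comp T.emb0.toMonoidHom

/-- `G^{o+1} = G^o`, i.e. the inclusion of stage `o` into stage `o+1` is onto -/
def StabilizesAt (T : AutTower G) (o : Ordinal.{u}) : Prop :=
  Function.Surjective (T.map (show o ≤ o + 1 from le_self_add))

end AutTower

/-!
Every stage embeds into every later one, so if the tower did not stabilize at any `α < λ⁺`,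
each such `α` would contribute an element of `G^{α+1}` outside `G^α`. Transported into
`G^{λ⁺}` these elements are pairwise distinct, since the one born at `α` already lies in
`G^β` for `α < β` while the one born at `β` does not. Hence `|G^{λ⁺}| ≥ λ⁺ > λ`.
-/

namespace AutTower

variable {G : Type u} [Group G] (T : AutTower G)

theorem range_map_trans_subset {o₁ o₂ o₃ : Ordinal.{u}} (h₁ : o₁ ≤ o₂) (h₂ : o₂ ≤ o₃) :
    Set.range (T.map (h₁.trans h₂)) ⊆ Set.range (T.map h₂) := by
  rintro _ ⟨x, rfl⟩
  exact ⟨T.map h₁ x, T.map_comp h₁ h₂ x⟩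

theorem exists_mem_range_notMem_range_of_not_stabilizesAt {o o' : Ordinal.{u}}
    (hs : ¬ T.StabilizesAt o) (h : o + 1 ≤ o') :
    ∃ x, x ∈ Set.range (T.map h) ∧ x ∉ Set.range (T.map (le_self_add.trans h)) := by
  obtain ⟨y, hy⟩ := not_forall.mp hs
  refine ⟨T.map h y, ⟨y, rfl⟩, ?_⟩
  rintro ⟨x, hx⟩
  rw [← T.map_comp le_self_add h] at hx
  exact hy ⟨x, T.map_injective h hx⟩

theorem card_le_mk_stage_of_forall_not_stabilizesAt {o : Ordinal.{u}}
    (hs : ∀ α < o, ¬ T.StabilizesAt α) : o.card ≤ Cardinal.mk ↥(T.Stage o) := by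
  choose x hx_mem hx_notMem using fun α : Set.Iio o =>
    T.exists_mem_range_notMem_range_of_not_stabilizesAt (hs α α.2) (Order.add_one_le_of_lt α.2)
  have hx : Function.Injective x := Function.Injective.of_lt_imp_ne fun α β hαβ hx_eq =>
    hx_notMem β (T.range_map_trans_subset (Order.add_one_le_of_lt hαβ) β.2.le
      (hx_eq ▸ hx_mem α))
  rw [← Cardinal.lift_le.{u + 1}, ← Cardinal.mk_Iio_ordinal]
  exact (Cardinal.lift_id'.{u, u + 1} _).symm.trans_le
    (Cardinal.lift_mk_le_lift_mk_of_injective hx)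

end AutTower

theorem autTower_stabilizes_below_succ_general {G : Type u} [Group G]
    (T : AutTower G) (lam : Cardinal.{u})
    (hbound : ∀ α : Ordinal.{u}, Cardinal.mk ↥(T.Stage α) ≤ lam) :
    ∃ α : Ordinal.{u}, α < (Order.succ lam).ord ∧ T.StabilizesAt α := by
  by_contra! hs
  have hcard := T.card_le_mk_stage_of_forall_not_stabilizesAt hs
  rw [Cardinal.card_ord] at hcard
  exact (Order.lt_succ lam).not_ge (hcard.trans (hbound _))

/-- If `G` is centerless and `λ` is a cardinal with `|G^α| ≤ λ` for every ordinal `α`,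
then the automorphism tower of `G` stabilizes and `τ_G < λ⁺`. -/
theorem autTower_stabilizes_below_succ {G : Type u} [Group G]
    (hG : Subgroup.center G = ⊥) (T : AutTower G) (lam : Cardinal.{u})
    (hbound : ∀ α : Ordinal.{u}, Cardinal.mk ↥(T.Stage α) ≤ lam) :
    ∃ α : Ordinal.{u}, α < (Order.succ lam).ord ∧ T.StabilizesAt α :=
  autTower_stabilizes_below_succ_general T lam hbound
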